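/- arXiv:alg-geom/9506002 — 4 statements merged into one kernel-verified Lean document; each statement's English description precedes it below -/
import Mathlib

section
/- Let f : ℝ² → ℝ be a nonconstant real polynomial function of degree d ≥ 1 in two variables with only finitely many critical points. Then for every admissible radius R (i.e., every R > 0 such that all critical points of f lie in the open disk of radius R), the index i of grad f around the circle of radius R satisfies |i| ≤ d − 1. -/
open MvPolynomial Filter

/-- Evaluation of a polynomial in two variables at the point `(x, y)`. -/
noncomputable def evalP (f : MvPolynomial (Fin 2) ℝ) (x y : ℝ) : ℝ :=
  MvPolynomial.eval ![x, y] f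

/-- `p` is a critical point of `f`: both partial derivatives vanish at `p`. -/
def IsCriticalPt (f : MvPolynomial (Fin 2) ℝ) (p : ℝ × ℝ) : Prop :=
  evalP (pderiv 0 f) p.1 p.2 = 0 ∧ evalP (pderiv 1 f) p.1 p.2 = 0

/-- `u(t) = f_x(R cos t, R sin t)`. -/
noncomputable def uFun (f : MvPolynomial (Fin 2) ℝ) (R t : ℝ) : ℝ :=
  evalP (pderiv 0 f) (R * Real.cos t) (R * Real.sin t)

/-- `v(t) = f_y(R cos t, R sin t)`. -/
noncomputable def vFun (f : MvPolynomial (Fin 2) ℝ) (R t : ℝ) : ℝ :=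
  evalP (pderiv 1 f) (R * Real.cos t) (R * Real.sin t)

/-- The index of `grad f` around the circle of radius `R`, as the winding-number
integral `(1/(2π)) ∫₀^{2π} (u v' - v u')/(u² + v²) dt`. -/
noncomputable def gradIndex (f : MvPolynomial (Fin 2) ℝ) (R : ℝ) : ℝ :=
  (1 / (2 * Real.pi)) *
    ∫ t in (0:ℝ)..(2 * Real.pi),
      (uFun f R t * deriv (vFun f R) t - vFun f R t * deriv (uFun f R) t) /
        ((uFun f R t) ^ 2 + (vFun f R t) ^ 2)


/-!
Put `w(t) = f_x + i f_y` at `(R cos t, R sin t)`, so that the index is the winding number of `w`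
around `0`. With `z = e^{it}` we have `R cos t = R (z + z⁻¹) / 2` and
`R sin t = R (z - z⁻¹) / (2i)`, and `grad f` has degree at most `n = d - 1`; hence `z ^ n w(t) = p(z)` for a complex polynomial `p`
of degree at most `2n`. The winding number of `t ↦ p(e^{it})` is, by the argument principle, the
number `N` of roots of `p` in the unit disc, so the index equals `N - n` with `0 ≤ N ≤ 2n`.
-/

open Complex Metric Real
open scoped Polynomial

theorem MvPolynomial.totalDegree_pderiv_le {σ R : Type*} [CommSemiring R] (i : σ)
    (p : MvPolynomial σ R) : (pderiv i p).totalDegree ≤ p.totalDegree - 1 := by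
  classical
  refine Finset.sup_le fun m hm => ?_
  have hcoeff : p.coeff (m + Finsupp.single i 1) ≠ 0 := by
    rw [mem_support_iff, coeff_pderiv] at hm
    exact left_ne_zero_of_mul hm
  have := le_totalDegree (mem_support_iff.mpr hcoeff)
  rw [Finsupp.sum_add_index' (fun _ => rfl) (fun _ _ _ => rfl), Finsupp.sum_single_index rfl]
    at this
  omega

theorem circleIntegral_sub_inv_of_notMem_closedBall {c w : ℂ} {R : ℝ} (hR : 0 ≤ R)
    (hw : w ∉ closedBall c R) : ∮ z in C(c, R), (z - w)⁻¹ = 0 := by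
  refine DiffContOnCl.circleIntegral_eq_zero hR (DifferentiableOn.diffContOnCl ?_)
  intro z hz
  refine (differentiableAt_id.sub_const w).inv ?_ |>.differentiableWithinAt
  intro h
  exact hw (sub_eq_zero.mp h ▸ closure_ball_subset_closedBall hz)

open Classical in
theorem circleIntegral_sum_one_div_sub {c : ℂ} {R : ℝ} (hR : 0 ≤ R) (s : Multiset ℂ)
    (hs : ∀ w ∈ s, w ∉ sphere c R) :
    ∮ z in C(c, R), (s.map fun w => 1 / (z - w)).sum =
      (s.filter (· ∈ ball c R)).card * (2 * π * I) := by
  have hcont : ∀ w ∉ sphere c R, ContinuousOn (fun z => 1 / (z - w)) (sphere c R) :=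
    fun w hw => continuousOn_const.div (continuousOn_id.sub continuousOn_const)
      fun z hz => sub_ne_zero.mpr fun h => hw (h ▸ hz)
  induction s using Multiset.induction with
  | empty => simp [circleIntegral]
  | cons w s ih =>
    have hw := hs w (Multiset.mem_cons_self w s)
    have hs' : ∀ v ∈ s, v ∉ sphere c R := fun v hv => hs v (Multiset.mem_cons_of_mem hv)
    simp only [Multiset.map_cons, Multiset.sum_cons]
    rw [circleIntegral.integral_add ((hcont w hw).circleIntegrable hR)
      ((continuousOn_multiset_sum s fun v hv => hcont v (hs' v hv)).circleIntegrable hR), ih hs']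
    by_cases hwb : w ∈ ball c R
    · rw [Multiset.filter_cons_of_pos _ hwb, Multiset.card_cons]
      simp only [one_div, circleIntegral.integral_sub_inv_of_mem_ball hwb]
      push_cast
      ring
    · have : w ∉ closedBall c R := fun h =>
        (lt_or_eq_of_le (mem_closedBall.mp h)).elim hwb fun h' => hw h'
      rw [Multiset.filter_cons_of_neg _ hwb]
      simp only [one_div, circleIntegral_sub_inv_of_notMem_closedBall hR this, zero_add]

open Classical in
theorem Polynomial.circleIntegral_derivative_div_eval {p : ℂ[X]} {c : ℂ} {R : ℝ} (hR : 0 ≤ R)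
    (hp : ∀ z ∈ sphere c R, p.eval z ≠ 0) :
    ∮ z in C(c, R), p.derivative.eval z / p.eval z =
      (p.roots.filter (· ∈ ball c R)).card * (2 * π * I) := by
  rw [circleIntegral.integral_congr hR fun z hz =>
    (IsAlgClosed.splits p).eval_derivative_div_eval_of_ne_zero (hp z hz)]
  exact circleIntegral_sum_one_div_sub hR _ fun w hw hws =>
    hp w hws (Polynomial.isRoot_of_mem_roots hw)

noncomputable def twistedLoop (p : ℂ[X]) (n : ℕ) (t : ℝ) : ℂ :=
  exp (-(n * t * I)) * p.eval (exp (t * I))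

theorem hasDerivAt_twistedLoop (p : ℂ[X]) (n : ℕ) (t : ℝ) :
    HasDerivAt (twistedLoop p n) (exp (-(n * t * I)) * -(n * I) * p.eval (exp (t * I)) +
      exp (-(n * t * I)) * (p.derivative.eval (exp (t * I)) * (exp (t * I) * I))) t := by
  have h1 : HasDerivAt (fun s : ℂ => -(n * s * I)) (-(n * I)) t := by
    simpa using (((hasDerivAt_id' (t : ℂ)).const_mul (n : ℂ)).mul_const I).fun_neg
  have h2 : HasDerivAt (fun s : ℂ => s * I) I t := hasDerivAt_mul_const I
  exact (h1.cexp.mul ((p.hasDerivAt _).comp _ h2.cexp)).comp_ofReal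

theorem deriv_twistedLoop_div {p : ℂ[X]} (n : ℕ) {t : ℝ} (ht : p.eval (exp (t * I)) ≠ 0) :
    deriv (twistedLoop p n) t / twistedLoop p n t = -(n * I) + deriv (circleMap 0 1) t *
      (p.derivative.eval (circleMap 0 1 t) / p.eval (circleMap 0 1 t)) := by
  have hloop : twistedLoop p n t ≠ 0 := mul_ne_zero (exp_ne_zero _) ht
  rw [(hasDerivAt_twistedLoop p n t).deriv, deriv_circleMap, circleMap_zero, div_eq_iff hloop]
  simp only [ofReal_one, one_mul, twistedLoop]
  field_simp

open Classical in
theorem integral_im_deriv_div_twistedLoop {p : ℂ[X]} (n : ℕ)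
    (hp : ∀ z ∈ sphere (0 : ℂ) 1, p.eval z ≠ 0) :
    ∫ t in 0..2 * π, (deriv (twistedLoop p n) t / twistedLoop p n t).im =
      2 * π * ((p.roots.filter (· ∈ ball 0 1)).card - n) := by
  have hF : CircleIntegrable (fun z => p.derivative.eval z / p.eval z) 0 1 :=
    (p.derivative.continuous.continuousOn.div p.continuous.continuousOn hp).circleIntegrable
      zero_le_one
  have hpt (t : ℝ) : p.eval (exp (t * I)) ≠ 0 := hp _ (by simp)
  calc ∫ t in 0..2 * π, (deriv (twistedLoop p n) t / twistedLoop p n t).im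
      = ∫ t in 0..2 * π, (-(n * I) + deriv (circleMap 0 1) t •
          (p.derivative.eval (circleMap 0 1 t) / p.eval (circleMap 0 1 t))).im :=
        intervalIntegral.integral_congr fun t _ => by
          rw [deriv_twistedLoop_div n (hpt t), smul_eq_mul]
    _ = (∫ t in 0..2 * π, (-(n * I) + deriv (circleMap 0 1) t •
          (p.derivative.eval (circleMap 0 1 t) / p.eval (circleMap 0 1 t)))).im :=
        intervalIntegral.intervalIntegral_im (intervalIntegrable_const.add hF.out)
    _ = (2 * π * -(n * I) + ∮ z in C(0, 1), p.derivative.eval z / p.eval z).im := by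
        rw [intervalIntegral.integral_add intervalIntegrable_const hF.out,
          intervalIntegral.integral_const]
        simp [circleIntegral]
    _ = 2 * π * ((p.roots.filter (· ∈ ball 0 1)).card - n) := by
        rw [p.circleIntegral_derivative_div_eval zero_le_one hp, ← ofReal_re (2 * π * _),
          ← mul_I_im]
        congr 1
        push_cast
        ring

theorem im_deriv_div_eq {w : ℝ → ℂ} {t : ℝ} (hw : DifferentiableAt ℝ w t) :
    (deriv w t / w t).im =
      ((w t).re * deriv (fun s => (w s).im) t - (w t).im * deriv (fun s => (w s).re) t) /
        ((w t).re ^ 2 + (w t).im ^ 2) := by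
  have hre : HasDerivAt (fun s => (w s).re) (deriv w t).re t :=
    reCLM.hasFDerivAt.comp_hasDerivAt t hw.hasDerivAt
  have him : HasDerivAt (fun s => (w s).im) (deriv w t).im t :=
    imCLM.hasFDerivAt.comp_hasDerivAt t hw.hasDerivAt
  rw [hre.deriv, him.deriv, div_im, normSq_apply]
  ring

theorem MvPolynomial.add_le_totalDegree_of_mem_support {R : Type*} [CommSemiring R]
    {g : MvPolynomial (Fin 2) R} {m : Fin 2 →₀ ℕ} (hm : m ∈ g.support) :
    m 0 + m 1 ≤ g.totalDegree := by
  simpa [Finsupp.sum_fintype, Fin.sum_univ_two] using le_totalDegree hm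

/-- `z ^ n * g (R (z + z⁻¹) / 2, R (z - z⁻¹) / (2i))`, which is a polynomial in `z` as soon as
`g.totalDegree ≤ n`; on `z = e^{it}` the arguments are `R cos t` and `R sin t`. -/
noncomputable def circleSubst (g : MvPolynomial (Fin 2) ℝ) (R : ℝ) (n : ℕ) : ℂ[X] :=
  ∑ m ∈ g.support, Polynomial.C ((g.coeff m : ℝ) : ℂ) *
    (Polynomial.C (R / 2 : ℂ) * (Polynomial.X ^ 2 + 1)) ^ m 0 *
    (Polynomial.C (R / (2 * I)) * (Polynomial.X ^ 2 - 1)) ^ m 1 *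
    Polynomial.X ^ (n - (m 0 + m 1))

theorem natDegree_circleSubst_le {g : MvPolynomial (Fin 2) ℝ} {n : ℕ} (hg : g.totalDegree ≤ n)
    (R : ℝ) : (circleSubst g R n).natDegree ≤ 2 * n := by
  refine Polynomial.natDegree_sum_le_of_forall_le _ _ fun m hm => ?_
  have := (add_le_totalDegree_of_mem_support hm).trans hg
  compute_degree
  omega

theorem exp_mul_I_mul_exp_neg_mul_I (t : ℝ) : exp (t * I) * exp (-t * I) = 1 := by
  rw [← Complex.exp_add, neg_mul, add_neg_cancel, Complex.exp_zero]

theorem ofReal_mul_cos_mul_exp (R t : ℝ) :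
    ((R * Real.cos t : ℝ) : ℂ) * exp (t * I) = R / 2 * (exp (t * I) ^ 2 + 1) := by
  rw [ofReal_mul, ofReal_cos, Complex.cos]
  linear_combination (R / 2 : ℂ) * exp_mul_I_mul_exp_neg_mul_I t

theorem ofReal_mul_sin_mul_exp (R t : ℝ) :
    ((R * Real.sin t : ℝ) : ℂ) * exp (t * I) = R / (2 * I) * (exp (t * I) ^ 2 - 1) := by
  rw [ofReal_mul, ofReal_sin, Complex.sin, div_mul_eq_mul_div, eq_div_iff (by simp)]
  linear_combination (R * I ^ 2 : ℂ) * exp_mul_I_mul_exp_neg_mul_I t +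
    (R * (1 - exp (t * I) ^ 2) : ℂ) * I_sq

theorem eval_circleSubst {g : MvPolynomial (Fin 2) ℝ} {n : ℕ} (hg : g.totalDegree ≤ n)
    (R t : ℝ) : (circleSubst g R n).eval (exp (t * I)) =
      exp (t * I) ^ n * (evalP g (R * Real.cos t) (R * Real.sin t) : ℂ) := by
  rw [evalP, MvPolynomial.eval_eq', ofReal_sum, Finset.mul_sum, circleSubst,
    Polynomial.eval_finsetSum]
  refine Finset.sum_congr rfl fun m hm => ?_
  have hn : exp (t * I) ^ n =
      exp (t * I) ^ m 0 * exp (t * I) ^ m 1 * exp (t * I) ^ (n - (m 0 + m 1)) := by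
    rw [← pow_add, ← pow_add,
      Nat.add_sub_cancel' ((add_le_totalDegree_of_mem_support hm).trans hg)]
  simp only [Polynomial.eval_mul, Polynomial.eval_pow, Polynomial.eval_add, Polynomial.eval_sub,
    Polynomial.eval_one, Polynomial.eval_C, Polynomial.eval_X, Fin.prod_univ_two, ofReal_mul,
    ofReal_pow, Matrix.cons_val_zero, Matrix.cons_val_one, hn, ← ofReal_mul_cos_mul_exp,
    ← ofReal_mul_sin_mul_exp]
  ring

noncomputable def gradCirclePoly (f : MvPolynomial (Fin 2) ℝ) (R : ℝ) (n : ℕ) : ℂ[X] :=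
  circleSubst (pderiv 0 f) R n + Polynomial.C I * circleSubst (pderiv 1 f) R n

section gradCirclePoly

variable {f : MvPolynomial (Fin 2) ℝ} {n : ℕ}

theorem totalDegree_pderiv_le_of_le (hf : f.totalDegree ≤ n + 1) (i : Fin 2) :
    (pderiv i f).totalDegree ≤ n :=
  (totalDegree_pderiv_le i f).trans (by omega)

theorem natDegree_gradCirclePoly_le (hf : f.totalDegree ≤ n + 1) (R : ℝ) :
    (gradCirclePoly f R n).natDegree ≤ 2 * n := by
  refine (Polynomial.natDegree_add_le _ _).trans (max_le ?_ ?_)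
  · exact natDegree_circleSubst_le (totalDegree_pderiv_le_of_le hf 0) R
  · exact (Polynomial.natDegree_C_mul_le _ _).trans
      (natDegree_circleSubst_le (totalDegree_pderiv_le_of_le hf 1) R)

theorem twistedLoop_gradCirclePoly (hf : f.totalDegree ≤ n + 1) (R : ℝ) :
    twistedLoop (gradCirclePoly f R n) n = fun t => (uFun f R t : ℂ) + vFun f R t * I := by
  ext t
  have hexp : exp (-(n * t * I)) * exp (t * I) ^ n = 1 := by
    rw [← Complex.exp_nat_mul, ← Complex.exp_add]
    ring_nf
    exact Complex.exp_zero
  rw [twistedLoop, gradCirclePoly, Polynomial.eval_add, Polynomial.eval_mul, Polynomial.eval_C,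
    eval_circleSubst (totalDegree_pderiv_le_of_le hf 0),
    eval_circleSubst (totalDegree_pderiv_le_of_le hf 1), uFun, vFun]
  linear_combination (↑(evalP (pderiv 0 f) (R * Real.cos t) (R * Real.sin t)) +
    ↑(evalP (pderiv 1 f) (R * Real.cos t) (R * Real.sin t)) * I) * hexp

end gradCirclePoly

theorem uFun_add_vFun_mul_I_ne_zero {f : MvPolynomial (Fin 2) ℝ} {R : ℝ}
    (hadm : ∀ p : ℝ × ℝ, IsCriticalPt f p → p.1 ^ 2 + p.2 ^ 2 < R ^ 2) (t : ℝ) :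
    (uFun f R t : ℂ) + vFun f R t * I ≠ 0 := by
  intro h
  have hcrit : IsCriticalPt f (R * Real.cos t, R * Real.sin t) := by
    simpa [Complex.ext_iff, IsCriticalPt, uFun, vFun] using h
  have := hadm _ hcrit
  nlinarith [Real.sin_sq_add_cos_sq t]

theorem eval_ne_zero_of_twistedLoop_ne_zero {p : ℂ[X]} {n : ℕ}
    (h : ∀ t, twistedLoop p n t ≠ 0) (z : ℂ) (hz : z ∈ sphere (0 : ℂ) 1) : p.eval z ≠ 0 := by
  have hz' : exp (z.arg * I) = z := by
    simpa [mem_sphere_zero_iff_norm.mp hz] using norm_mul_exp_arg_mul_I z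
  exact hz' ▸ right_ne_zero_of_mul (h z.arg)

open Classical in
theorem gradIndex_eq_card_roots_sub {f : MvPolynomial (Fin 2) ℝ} {R : ℝ} {p : ℂ[X]} {n : ℕ}
    (hloop : twistedLoop p n = fun t => (uFun f R t : ℂ) + vFun f R t * I)
    (hp : ∀ z ∈ sphere (0 : ℂ) 1, p.eval z ≠ 0) :
    gradIndex f R = (p.roots.filter (· ∈ ball 0 1)).card - n := by
  have hu : uFun f R = fun t => (twistedLoop p n t).re := by simp [hloop]
  have hv : vFun f R = fun t => (twistedLoop p n t).im := by simp [hloop]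
  have hdiff (t : ℝ) := (hasDerivAt_twistedLoop p n t).differentiableAt
  simp only [gradIndex, hu, hv, ← im_deriv_div_eq (hdiff _),
    integral_im_deriv_div_twistedLoop n hp]
  field_simp

theorem index_abs_le_degree_sub_one_general
    (f : MvPolynomial (Fin 2) ℝ) (d : ℕ) (hd : f.totalDegree = d) (hd1 : 1 ≤ d)
    (R : ℝ)
    (hadm : ∀ p : ℝ × ℝ, IsCriticalPt f p → p.1 ^ 2 + p.2 ^ 2 < R ^ 2)
    (i : ℤ) (hi : (i : ℝ) = gradIndex f R) :
    |i| ≤ (d : ℤ) - 1 := by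
  classical
  obtain ⟨n, rfl⟩ : ∃ n, d = n + 1 := ⟨d - 1, by omega⟩
  set p := gradCirclePoly f R n
  have hloop : twistedLoop p n = _ := twistedLoop_gradCirclePoly hd.le R
  have hp := eval_ne_zero_of_twistedLoop_ne_zero fun t => by
    rw [hloop]; exact uFun_add_vFun_mul_I_ne_zero hadm t
  set N := (p.roots.filter (· ∈ ball 0 1)).card
  have hN : N ≤ 2 * n := calc
    N ≤ Multiset.card p.roots := Multiset.card_le_card (Multiset.filter_le _ _)
    _ ≤ p.natDegree := p.card_roots'
    _ ≤ 2 * n := natDegree_gradCirclePoly_le hd.le R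
  have hiN : i = N - n := by exact_mod_cast hi.trans (gradIndex_eq_card_roots_sub hloop hp)
  rw [hiN, abs_le]
  constructor <;> push_cast <;> omega

theorem index_abs_le_degree_sub_one
    (f : MvPolynomial (Fin 2) ℝ) (d : ℕ) (hd : f.totalDegree = d) (hd1 : 1 ≤ d)
    (hfin : {p : ℝ × ℝ | IsCriticalPt f p}.Finite)
    (R : ℝ) (hR : 0 < R)
    (hadm : ∀ p : ℝ × ℝ, IsCriticalPt f p → p.1 ^ 2 + p.2 ^ 2 < R ^ 2)
    (i : ℤ) (hi : (i : ℝ) = gradIndex f R) :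
    |i| ≤ (d : ℤ) - 1 :=
  index_abs_le_degree_sub_one_general f d hd hd1 R hadm i hi
end

section
/- Let F ∈ ℝ[x,y] be a nonzero homogeneous polynomial of degree d ≥ 1, let (a,b) ∈ ℝ² \ {(0,0)}, and set ℓ = b·x − a·y. Suppose ℓ divides F with multiplicity exactly m ≥ 1 (that is, ℓ^m divides F but ℓ^{m+1} does not). Then the polynomial x·F_y − y·F_x is nonzero and ℓ divides it with multiplicity exactly m − 1 (that is, ℓ^{m−1} divides x·F_y − y·F_x but ℓ^m does not). -/
/-!
`D = X 0 * ∂₁ - X 1 * ∂₀` is a derivation. Writing `F = ℓ ^ (k + 1) * G` with `ℓ ∤ G`, the Leibniz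
rule gives `D F = ℓ ^ k * (ℓ * D G + (k + 1) • (G * D ℓ))`. Here `D ℓ = -(a X 0 + b X 1)` does not
vanish at `(a, b)`, where `ℓ` does, so the prime `ℓ` divides neither `G` nor `(k + 1) • D ℓ`, hence
not the second factor.
-/

open MvPolynomial

namespace Derivation

variable {R A : Type*} [CommSemiring R] [CommRing A] [Algebra R A]
  (D : Derivation R A A) (p G : A) (k : ℕ)

theorem apply_pow_succ_mul :
    D (p ^ (k + 1) * G) = p ^ k * (p * D G + (k + 1) • (G * D p)) := by
  simp only [leibniz, leibniz_pow, Nat.add_sub_cancel, smul_eq_mul, nsmul_eq_mul]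
  ring

theorem pow_dvd_apply_pow_succ_mul : p ^ k ∣ D (p ^ (k + 1) * G) :=
  (apply_pow_succ_mul D p G k).symm ▸ dvd_mul_right _ _

theorem not_pow_succ_dvd_apply_pow_succ_mul [IsDomain A] {p G : A} (hp : Prime p)
    (hG : ¬ p ∣ G) (hDp : ¬ p ∣ (k + 1) • D p) : ¬ p ^ (k + 1) ∣ D (p ^ (k + 1) * G) := by
  rw [apply_pow_succ_mul, pow_succ, mul_dvd_mul_iff_left (pow_ne_zero k hp.ne_zero)]
  intro h
  have : p ∣ G * ((k + 1) • D p) := by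
    rw [mul_smul_comm]
    exact (dvd_add_right (dvd_mul_right p (D G))).mp h
  exact (hp.dvd_or_dvd this).elim hG hDp

end Derivation

namespace MvPolynomial

theorem prime_of_totalDegree_eq_one {σ K : Type*} [Field K] {p : MvPolynomial σ K}
    (hp : p.totalDegree = 1) : Prime p := by
  refine (irreducible_of_totalDegree_eq_one hp fun x hx ↦ isUnit_iff_ne_zero.mpr ?_).prime
  rintro rfl
  have : p = 0 := ext _ _ fun i ↦ by simpa using hx i
  simp [this] at hp

theorem totalDegree_C_mul_X_sub_C_mul_X {K : Type*} [Field K] {a b : K} (hab : (a, b) ≠ (0, 0)) :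
    (C b * X 0 - C a * X 1 : MvPolynomial (Fin 2) K).totalDegree = 1 := by
  refine le_antisymm ?_ ?_
  · refine (totalDegree_sub _ _).trans (max_le ?_ ?_) <;>
      exact (totalDegree_mul _ _).trans (by simp)
  · have coeff_single (i : Fin 2) : (C b * X 0 - C a * X 1 : MvPolynomial (Fin 2) K).coeff
        (Finsupp.single i 1) = ![b, -a] i := by
      fin_cases i <;> simp [coeff_X, Finsupp.single_left_inj one_ne_zero]
    obtain ⟨i, hi⟩ : ∃ i, ![b, -a] i ≠ 0 := by
      by_contra! h
      exact hab (by simpa using And.intro (h 1) (h 0))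
    simpa using le_totalDegree (mem_support_iff.mpr ((coeff_single i).trans_ne hi))

variable (R : Type*) [CommRing R]

noncomputable def angularDeriv : Derivation R (MvPolynomial (Fin 2) R) (MvPolynomial (Fin 2) R) :=
  (X 0 : MvPolynomial (Fin 2) R) • pderiv 1 - (X 1 : MvPolynomial (Fin 2) R) • pderiv 0

theorem angularDeriv_apply (P : MvPolynomial (Fin 2) R) :
    angularDeriv R P = X 0 * pderiv 1 P - X 1 * pderiv 0 P := rfl

theorem angularDeriv_C_mul_X_sub_C_mul_X (a b : R) :
    angularDeriv R (C b * X 0 - C a * X 1) = -(C a * X 0 + C b * X 1) := by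
  simp [angularDeriv_apply, pderiv_X]
  ring

theorem C_mul_X_sub_C_mul_X_not_dvd_nsmul_angularDeriv {K : Type*} [Field K] [LinearOrder K]
    [IsStrictOrderedRing K] {a b : K} (hab : (a, b) ≠ (0, 0)) (n : ℕ) :
    ¬ (C b * X 0 - C a * X 1) ∣ (n + 1) • angularDeriv K (C b * X 0 - C a * X 1) := by
  rintro ⟨Q, hQ⟩
  have hpos : 0 < a ^ 2 + b ^ 2 := by
    rcases eq_or_ne a 0 with rfl | ha
    · have hb : b ≠ 0 := by simpa using hab
      positivity
    · positivity
  rw [angularDeriv_C_mul_X_sub_C_mul_X] at hQ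
  have := congr_arg (eval ![a, b]) hQ
  simp only [smul_neg, nsmul_eq_mul, map_neg, map_mul, map_add, map_sub, map_natCast, eval_C,
    eval_X, Matrix.cons_val_zero, Matrix.cons_val_one, Matrix.cons_val_fin_one, Nat.cast_succ,
    map_one, mul_comm b a, sub_self, zero_mul] at this
  nlinarith [mul_pos (n.cast_add_one_pos (α := K)) hpos]

end MvPolynomial

theorem tangency_poly_multiplicity_general
    (F : MvPolynomial (Fin 2) ℝ)
    (a b : ℝ) (hab : (a, b) ≠ ((0 : ℝ), (0 : ℝ)))
    (m : ℕ) (hm : 1 ≤ m)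
    (hdvd : (C b * X 0 - C a * X 1) ^ m ∣ F)
    (hndvd : ¬ (C b * X 0 - C a * X 1) ^ (m + 1) ∣ F) :
    (X 0 * pderiv 1 F - X 1 * pderiv 0 F : MvPolynomial (Fin 2) ℝ) ≠ 0 ∧
    (C b * X 0 - C a * X 1) ^ (m - 1) ∣ (X 0 * pderiv 1 F - X 1 * pderiv 0 F) ∧
    ¬ (C b * X 0 - C a * X 1) ^ m ∣ (X 0 * pderiv 1 F - X 1 * pderiv 0 F) := by
  obtain ⟨k, rfl⟩ := Nat.exists_eq_add_of_le' hm
  have hℓ := prime_of_totalDegree_eq_one (totalDegree_C_mul_X_sub_C_mul_X hab)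
  obtain ⟨G, rfl⟩ := hdvd
  have hG : ¬ (C b * X 0 - C a * X 1) ∣ G := fun ⟨H, hH⟩ ↦
    hndvd ⟨H, by rw [hH, pow_succ _ (k + 1), mul_assoc]⟩
  have hnot := (angularDeriv ℝ).not_pow_succ_dvd_apply_pow_succ_mul k hℓ hG
    (C_mul_X_sub_C_mul_X_not_dvd_nsmul_angularDeriv hab k)
  rw [← angularDeriv_apply, Nat.add_sub_cancel]
  exact ⟨fun h ↦ hnot (h ▸ dvd_zero _), (angularDeriv ℝ).pow_dvd_apply_pow_succ_mul _ G k, hnot⟩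

theorem tangency_poly_multiplicity
    (F : MvPolynomial (Fin 2) ℝ) (d : ℕ) (hd : 1 ≤ d)
    (hhom : F.IsHomogeneous d) (hF0 : F ≠ 0)
    (a b : ℝ) (hab : (a, b) ≠ ((0 : ℝ), (0 : ℝ)))
    (m : ℕ) (hm : 1 ≤ m)
    (hdvd : (C b * X 0 - C a * X 1) ^ m ∣ F)
    (hndvd : ¬ (C b * X 0 - C a * X 1) ^ (m + 1) ∣ F) :
    (X 0 * pderiv 1 F - X 1 * pderiv 0 F : MvPolynomial (Fin 2) ℝ) ≠ 0 ∧
    (C b * X 0 - C a * X 1) ^ (m - 1) ∣ (X 0 * pderiv 1 F - X 1 * pderiv 0 F) ∧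
    ¬ (C b * X 0 - C a * X 1) ^ m ∣ (X 0 * pderiv 1 F - X 1 * pderiv 0 F) :=
  tangency_poly_multiplicity_general F a b hab m hm hdvd hndvd
end

section
/- Fix an integer k ≥ 1 and let f(x,y) = (y(x²+1) − 1)·(y(x²+2) − 1)·…·(y(x²+k) − 1). Then f has exactly k − 1 critical points, and every critical point of f is a local extremum (a local maximum or a local minimum); f has no other real critical points. In particular, for k = 1 the polynomial f has no critical points. -/
/-!
Write `f (x, y) = F (x², y)` with `F (u, y) = ∏ⱼ (y (u + j) - 1)` and
`S = ∑ⱼ ∏_{i ≠ j} (y (u + i) - 1)`. Then `∂F/∂u = y S`, and since `y (u + j) = (y (u + j) - 1) + 1`,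
also `y ∂F/∂y = k F + S`. At a critical point `∂F/∂y = 0`, which fails for `y = 0`; so `S = -k F`,
and `F`, `S` cannot vanish together because the factors are pairwise distinct. Hence `S ≠ 0`, and
`∂f/∂x = 2 x y S = 0` forces `x = 0`: the critical points are the `(0, c)` with `g' c = 0`, where
`g = F (0, ·)` has the roots `1/j`. Rolle puts a root of `g'` in each of the `k - 1` gaps
`(1/(m+1), 1/m)`, and `deg g' = k - 1` says these are all of them. On its gap `c` is then the only
critical point of `g`, hence its extremum there, and `∂F/∂u (0, c) = -k c g c` has the sign opposite
to `g c`: moving `u = x²` away from `0` pushes `f` further in the same direction.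
-/

open Finset Filter Topology Polynomial

/-- `p` is a critical point of `f : ℝ² → ℝ`: both partial derivatives vanish at `p`. -/
def IsCritPt (f : ℝ × ℝ → ℝ) (p : ℝ × ℝ) : Prop :=
  deriv (fun x => f (x, p.2)) p.1 = 0 ∧ deriv (fun y => f (p.1, y)) p.2 = 0

theorem Finset.sum_add_one_mul_prod_erase {ι R : Type*} [CommRing R] [DecidableEq ι]
    (s : Finset ι) (a : ι → R) :
    ∑ j ∈ s, (a j + 1) * ∏ i ∈ s.erase j, a i
      = s.card * ∏ i ∈ s, a i + ∑ j ∈ s, ∏ i ∈ s.erase j, a i := by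
  simp_rw [add_mul, one_mul, sum_add_distrib]
  rw [sum_congr rfl fun j hj => mul_prod_erase s a hj, sum_const, nsmul_eq_mul]

theorem Finset.sum_prod_erase_ne_zero {ι R : Type*} [CommRing R] [IsDomain R] [DecidableEq ι]
    {s : Finset ι} {a : ι → R} (ha : Set.InjOn a s) (h : ∏ i ∈ s, a i = 0) :
    ∑ j ∈ s, ∏ i ∈ s.erase j, a i ≠ 0 := by
  obtain ⟨m, hm, ham⟩ := prod_eq_zero_iff.1 h
  rw [sum_eq_single_of_mem m hm fun j _ hjm =>
    prod_eq_zero (mem_erase.2 ⟨Ne.symm hjm, hm⟩) ham]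
  refine prod_ne_zero_iff.2 fun i hi hai => (mem_erase.1 hi).1 (ha ?_ hm (hai.trans ham.symm))
  exact (mem_erase.1 hi).2

theorem Polynomial.card_roots_toFinset_eq_and_unique_root {ι R : Type*} [CommRing R] [IsDomain R]
    [DecidableEq R] {p : R[X]} (hp : p ≠ 0) {s : Finset ι} {I : ι → Set R}
    (hI : (s : Set ι).PairwiseDisjoint I) (hroot : ∀ i ∈ s, ∃ x ∈ I i, p.IsRoot x)
    (hdeg : p.natDegree ≤ s.card) :
    p.roots.toFinset.card = s.card ∧
      ∀ x, p.IsRoot x → ∃ i ∈ s, x ∈ I i ∧ ∀ z ∈ I i, p.IsRoot z → z = x := by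
  classical
  choose! r hrI hr using hroot
  have hinj : Set.InjOn r s := fun i hi j hj hij =>
    hI.elim hi hj (Set.not_disjoint_iff.2 ⟨r i, hrI i hi, hij ▸ hrI j hj⟩)
  have hsub : s.image r ⊆ p.roots.toFinset := fun x hx => by
    obtain ⟨i, hi, rfl⟩ := mem_image.1 hx
    exact Multiset.mem_toFinset.2 ((mem_roots hp).2 (hr i hi))
  have hcard : s.card ≤ p.roots.toFinset.card :=
    card_image_of_injOn hinj ▸ card_le_card hsub
  have himage : s.image r = p.roots.toFinset := eq_of_subset_of_card_le hsub <|
    (Multiset.toFinset_card_le _).trans <| (card_roots' p).trans <| hdeg.trans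
      (card_image_of_injOn hinj).ge
  have hmem : ∀ x, p.IsRoot x → ∃ i ∈ s, r i = x := fun x hx =>
    mem_image.1 (himage ▸ Multiset.mem_toFinset.2 ((mem_roots hp).2 hx))
  refine ⟨le_antisymm (himage ▸ card_image_of_injOn hinj).le hcard, fun x hx => ?_⟩
  obtain ⟨i, hi, rfl⟩ := hmem x hx
  refine ⟨i, hi, hrI i hi, fun z hz hzr => ?_⟩
  obtain ⟨j, hj, rfl⟩ := hmem z hzr
  rw [hI.elim hj hi (Set.not_disjoint_iff.2 ⟨r j, hrI j hj, hz⟩)]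

section

open Set

theorem isLocalMax_of_unique_deriv_eq_zero {φ : ℝ → ℝ} {a b c : ℝ}
    (hφ : ContinuousOn φ (Icc a b)) (hc : c ∈ Ioo a b) (ha : φ a < φ c) (hb : φ b < φ c)
    (huniq : ∀ z ∈ Ioo a b, deriv φ z = 0 → z = c) : IsLocalMax φ c := by
  obtain ⟨d, hd, hdmax⟩ :=
    isCompact_Icc.exists_isMaxOn (nonempty_Icc.2 (hc.1.le.trans hc.2.le)) hφ
  have hcd : φ c ≤ φ d := hdmax (Ioo_subset_Icc_self hc)
  have hd' : d ∈ Ioo a b := ⟨lt_of_le_of_ne hd.1 (by rintro rfl; linarith),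
    lt_of_le_of_ne hd.2 (by rintro rfl; linarith)⟩
  have hdc : d = c := huniq d hd' ((hdmax.isLocalMax (Icc_mem_nhds hd'.1 hd'.2)).deriv_eq_zero)
  exact (hdc ▸ hdmax).isLocalMax (Icc_mem_nhds hc.1 hc.2)

theorem isLocalMax_comp_sq {F F' : ℝ → ℝ → ℝ} {c : ℝ}
    (hF : ∀ u y, HasDerivAt (fun u => F u y) (F' u y) u)
    (hF' : ∀ᶠ q : ℝ × ℝ in 𝓝 (0, c), F' q.1 q.2 ≤ 0) (hmax : IsLocalMax (F 0) c) :
    IsLocalMax (fun p : ℝ × ℝ => F (p.1 ^ 2) p.2) (0, c) := by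
  obtain ⟨ε, hε, hF'ε⟩ := Metric.eventually_nhds_iff.1 hF'
  have hx : ∀ᶠ x : ℝ in 𝓝 0, x ^ 2 < ε :=
    (continuous_pow 2).continuousAt.eventually_lt continuousAt_const (by simpa using hε)
  have hy : ∀ᶠ y in 𝓝 c, dist y c < ε := Metric.ball_mem_nhds c hε
  filter_upwards [hx.prod_nhds (hy.and hmax)] with ⟨x, y⟩ ⟨hxε, hyε, hy⟩
  have hanti : AntitoneOn (fun u => F u y) (Icc 0 (x ^ 2)) := by
    refine antitoneOn_of_hasDerivWithinAt_nonpos (convex_Icc _ _)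
      (fun u _ => (hF u y).continuousAt.continuousWithinAt)
      (fun u _ => (hF u y).hasDerivWithinAt) fun u hu => hF'ε (y := (u, y)) ?_
    rw [interior_Icc] at hu
    rw [Prod.dist_eq, max_lt_iff, Real.dist_eq, sub_zero, abs_of_pos hu.1]
    exact ⟨hu.2.trans hxε, hyε⟩
  calc F (x ^ 2) y ≤ F 0 y :=
        hanti (left_mem_Icc.2 (sq_nonneg x)) (right_mem_Icc.2 (sq_nonneg x)) (sq_nonneg x)
    _ ≤ F (0 ^ 2) c := by simpa using hy

theorem isLocalMax_or_isLocalMin_comp_sq {F F' : ℝ → ℝ → ℝ} {a b c : ℝ}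
    (hF : ∀ u y, HasDerivAt (fun u => F u y) (F' u y) u)
    (hF' : ContinuousAt (Function.uncurry F') (0, c)) (hcont : ContinuousOn (F 0) (Icc a b))
    (ha : F 0 a = 0) (hb : F 0 b = 0) (hc : c ∈ Ioo a b)
    (huniq : ∀ z ∈ Ioo a b, deriv (F 0) z = 0 → z = c) (hsign : F' 0 c * F 0 c < 0) :
    IsLocalMax (fun p : ℝ × ℝ => F (p.1 ^ 2) p.2) (0, c) ∨
      IsLocalMin (fun p : ℝ × ℝ => F (p.1 ^ 2) p.2) (0, c) := by
  rcases lt_or_gt_of_ne (right_ne_zero_of_mul hsign.ne) with hneg | hpos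
  · right
    have hF'pos : 0 < F' 0 c := pos_of_mul_neg_left hsign hneg.le
    have hmax : IsLocalMax (fun y => -F 0 y) c :=
      isLocalMax_of_unique_deriv_eq_zero hcont.neg hc (by simpa [ha]) (by simpa [hb])
        fun z hz hz0 => huniq z hz (by simpa [deriv.fun_neg] using hz0)
    simpa using (isLocalMax_comp_sq (F := fun u y => -F u y) (F' := fun u y => -F' u y)
      (fun u y => (hF u y).neg) ((hF'.eventually (lt_mem_nhds hF'pos)).mono
        fun q hq => neg_nonpos.2 hq.le) hmax).neg
  · left
    exact isLocalMax_comp_sq hF ((hF'.eventually (gt_mem_nhds (neg_of_mul_neg_left hsign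
      hpos.le))).mono fun q hq => hq.le)
      (isLocalMax_of_unique_deriv_eq_zero hcont hc (by rwa [ha]) (by rwa [hb]) huniq)

end

namespace KSubOneExtrema

def F (k : ℕ) (u y : ℝ) : ℝ := ∏ j ∈ Icc 1 k, (y * (u + j) - 1)

def S (k : ℕ) (u y : ℝ) : ℝ := ∑ j ∈ Icc 1 k, ∏ i ∈ (Icc 1 k).erase j, (y * (u + i) - 1)

noncomputable def G (k : ℕ) : ℝ[X] := ∏ j ∈ Icc 1 k, (C (j : ℝ) * X - 1)

noncomputable def invSucc (n : ℕ) : ℝ := ((n : ℝ) + 1)⁻¹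

variable {k : ℕ}

theorem hasDerivAt_F_fst (k : ℕ) (u y : ℝ) :
    HasDerivAt (fun u => F k u y) (y * S k u y) u := by
  refine (HasDerivAt.fun_finsetProd (u := Icc 1 k) (x := u) fun j _ =>
    (((hasDerivAt_id u).add_const (j : ℝ)).const_mul y).sub_const 1).congr_deriv ?_
  simp only [S, id, smul_eq_mul, one_mul, sum_mul, mul_comm y]

theorem hasDerivAt_F_snd (k : ℕ) (u y : ℝ) :
    HasDerivAt (F k u)
      (∑ j ∈ Icc 1 k, (∏ i ∈ (Icc 1 k).erase j, (y * (u + i) - 1)) * (u + j)) y := by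
  have := HasDerivAt.fun_finsetProd (u := Icc 1 k) (x := y) fun j _ =>
    (hasDerivAt_mul_const (u + j : ℝ)).sub_const 1
  simp only [smul_eq_mul] at this
  exact this

theorem continuous_S (k : ℕ) : Continuous (Function.uncurry (S k)) := by
  unfold S
  fun_prop

theorem mul_deriv_F_snd (k : ℕ) (u y : ℝ) : y * deriv (F k u) y = k * F k u y + S k u y := by
  have hcard : ((Icc 1 k).card : ℝ) = k := by simp
  rw [(hasDerivAt_F_snd k u y).deriv, mul_sum, F, S, ← hcard, ← sum_add_one_mul_prod_erase]
  exact sum_congr rfl fun j _ => by ring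

theorem S_eq_of_deriv_F_snd_eq_zero {u y : ℝ} (h : deriv (F k u) y = 0) :
    S k u y = -(k * F k u y) := by
  linear_combination (mul_deriv_F_snd k u y).symm + y * h

theorem deriv_F_snd_zero_ne_zero (hk : 1 ≤ k) {u : ℝ} (hu : 0 ≤ u) : deriv (F k u) 0 ≠ 0 := by
  have hterm : ∀ j ∈ Icc 1 k,
      (∏ i ∈ (Icc 1 k).erase j, ((0 : ℝ) * (u + i) - 1)) * (u + j) = (-1) ^ (k - 1) * (u + j) := by
    intro j hj
    simp [card_erase_of_mem hj]
  rw [(hasDerivAt_F_snd k u 0).deriv, sum_congr rfl hterm, ← mul_sum]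
  refine mul_ne_zero (pow_ne_zero _ (by norm_num)) (sum_pos (fun j hj => ?_) ⟨1, ?_⟩).ne'
  · have : (1 : ℝ) ≤ j := by exact_mod_cast (mem_Icc.1 hj).1
    linarith
  · exact mem_Icc.2 ⟨le_rfl, hk⟩

theorem F_ne_zero_of_deriv_F_snd_eq_zero {u y : ℝ} (hy : y ≠ 0) (h : deriv (F k u) y = 0) :
    F k u y ≠ 0 := fun hF => by
  have hS : S k u y = 0 := by rw [S_eq_of_deriv_F_snd_eq_zero h, hF, mul_zero, neg_zero]
  refine sum_prod_erase_ne_zero (fun i _ j _ hij => ?_) hF hS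
  exact_mod_cast add_left_cancel (mul_left_cancel₀ hy (sub_left_inj.1 hij))

theorem deriv_F_sq_fst (k : ℕ) (x y : ℝ) :
    deriv (fun x => F k (x ^ 2) y) x = 2 * x * (y * S k (x ^ 2) y) := by
  refine ((hasDerivAt_F_fst k (x ^ 2) y).comp x (hasDerivAt_pow 2 x)).deriv.trans ?_
  push_cast
  ring

theorem F_zero_eq_eval_G (k : ℕ) : F k 0 = fun y => (G k).eval y :=
  funext fun y => by simp [G, F, eval_prod, mul_comm]

theorem deriv_F_zero (k : ℕ) (y : ℝ) : deriv (F k 0) y = (G k).derivative.eval y := by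
  rw [F_zero_eq_eval_G, Polynomial.deriv]

theorem isCritPt_iff (hk : 1 ≤ k) (a b : ℝ) :
    IsCritPt (fun p => F k (p.1 ^ 2) p.2) (a, b) ↔ a = 0 ∧ (G k).derivative.IsRoot b := by
  rw [IsCritPt, deriv_F_sq_fst, IsRoot.def, ← deriv_F_zero]
  constructor
  · rintro ⟨hx, hy⟩
    have hb : b ≠ 0 := by
      rintro rfl
      exact deriv_F_snd_zero_ne_zero hk (sq_nonneg a) hy
    have hS : S k (a ^ 2) b ≠ 0 := by
      rw [S_eq_of_deriv_F_snd_eq_zero hy, neg_ne_zero]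
      exact mul_ne_zero (by exact_mod_cast (by omega : k ≠ 0))
        (F_ne_zero_of_deriv_F_snd_eq_zero hb hy)
    have ha : a = 0 := by simpa [hb, hS] using hx
    subst ha
    simpa using hy
  · rintro ⟨rfl, hy⟩
    simpa using hy

theorem natDegree_G_le (k : ℕ) : (G k).natDegree ≤ k := by
  refine (natDegree_prod_le (Icc 1 k) fun j : ℕ => C (j : ℝ) * X - 1).trans ?_
  have h1 : ∀ j : ℕ, (C (j : ℝ) * X - 1).natDegree ≤ 1 := fun j => by
    rw [← C_1, natDegree_sub_C]
    exact (natDegree_C_mul_le _ _).trans natDegree_X_le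
  simpa using sum_le_sum fun j (_ : j ∈ Icc 1 k) => h1 j

theorem derivative_G_ne_zero (hk : 1 ≤ k) : (G k).derivative ≠ 0 := fun h => by
  apply deriv_F_snd_zero_ne_zero hk le_rfl
  rw [deriv_F_zero, h, eval_zero]

theorem F_zero_invSucc {n : ℕ} (hn : n < k) : F k 0 (invSucc n) = 0 := by
  refine prod_eq_zero (i := n + 1) (mem_Icc.2 ⟨by omega, hn⟩) ?_
  rw [invSucc, zero_add, Nat.cast_succ, inv_mul_cancel₀ (by positivity), sub_self]

theorem invSucc_pos (n : ℕ) : 0 < invSucc n := by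
  unfold invSucc
  positivity

theorem strictAnti_invSucc : StrictAnti invSucc := fun m n h => by
  unfold invSucc
  gcongr

theorem exists_isRoot_derivative_G {n : ℕ} (hn : n + 1 < k) :
    ∃ c ∈ Set.Ioo (invSucc (n + 1)) (invSucc n), (G k).derivative.IsRoot c := by
  obtain ⟨c, hc, hc0⟩ := exists_deriv_eq_zero (strictAnti_invSucc n.lt_succ_self)
    (F_zero_eq_eval_G k ▸ (G k).continuousOn)
    (by rw [F_zero_invSucc hn, F_zero_invSucc (by omega)])
  exact ⟨c, hc, by rwa [deriv_F_zero] at hc0⟩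

theorem mul_S_mul_F_neg (hk : 1 ≤ k) {u y : ℝ} (hy : 0 < y) (h : deriv (F k u) y = 0) :
    y * S k u y * F k u y < 0 := by
  have hF := F_ne_zero_of_deriv_F_snd_eq_zero hy.ne' h
  have hk' : (0 : ℝ) < k := by exact_mod_cast hk
  rw [S_eq_of_deriv_F_snd_eq_zero h]
  linear_combination mul_pos (mul_pos hy hk') (sq_pos_of_ne_zero hF)

end KSubOneExtrema

open KSubOneExtrema in
theorem k_sub_one_extrema_no_other_critical_points
    (k : ℕ) (hk : 1 ≤ k) (f : ℝ × ℝ → ℝ)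
    (hf : ∀ p : ℝ × ℝ, f p = ∏ j ∈ Finset.Icc 1 k, (p.2 * (p.1 ^ 2 + (j : ℝ)) - 1)) :
    {p : ℝ × ℝ | IsCritPt f p}.Finite ∧
    {p : ℝ × ℝ | IsCritPt f p}.ncard = k - 1 ∧
    ∀ p : ℝ × ℝ, IsCritPt f p → IsLocalMax f p ∨ IsLocalMin f p := by
  obtain rfl : f = fun p => F k (p.1 ^ 2) p.2 := funext hf
  have hcrit : {p | IsCritPt (fun p => F k (p.1 ^ 2) p.2) p} =
      (fun c => (0, c)) '' {c | (G k).derivative.IsRoot c} := by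
    ext ⟨a, b⟩
    simp [isCritPt_iff hk, eq_comm, and_comm]
  obtain ⟨hcard, hunique⟩ := card_roots_toFinset_eq_and_unique_root (derivative_G_ne_zero hk)
    ((strictAnti_invSucc.antitone.pairwise_disjoint_on_Ioo_succ).set_pairwise (range (k - 1)))
    (fun n hn => exists_isRoot_derivative_G (by simp at hn; omega))
    (((natDegree_derivative_le _).trans (Nat.sub_le_sub_right (natDegree_G_le k) 1)).trans_eq
      (card_range _).symm)
  refine ⟨hcrit ▸ (finite_setOfPred_isRoot (derivative_G_ne_zero hk)).image _, ?_, ?_⟩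
  · have hroots : {c | (G k).derivative.IsRoot c} = ↑(G k).derivative.roots.toFinset := by
      ext c
      simp [mem_roots (derivative_G_ne_zero hk)]
    rw [hcrit, Set.ncard_image_of_injective _ (Prod.mk_right_injective 0), hroots,
      Set.ncard_coe_finset, hcard, card_range]
  · rintro ⟨a, b⟩ hp
    obtain ⟨rfl, hb⟩ := (isCritPt_iff hk a b).1 hp
    obtain ⟨n, hn, hbI, huniq⟩ := hunique b hb
    have hn : n + 1 < k := by simp at hn; omega
    rw [IsRoot.def, ← deriv_F_zero] at hb
    exact isLocalMax_or_isLocalMin_comp_sq (hasDerivAt_F_fst k)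
      (continuous_snd.mul (continuous_S k)).continuousAt
      (F_zero_eq_eval_G k ▸ (G k).continuousOn) (F_zero_invSucc hn)
      (F_zero_invSucc (by omega)) hbI
      (fun z hz hz0 => huniq z hz (by rwa [IsRoot.def, ← deriv_F_zero]))
      (mul_S_mul_F_neg hk ((invSucc_pos _).trans hbI.1) hb)
end

section
/- Let f(x,y) = (xy² − y − 1)² + (y² − 1)². Then f has exactly two critical points, namely (2, 1) and (0, −1), and both are local minima of f (indeed both are absolute minima, with f(2,1) = f(0,−1) = 0). -/
def twoMinimaFun (p : ℝ × ℝ) : ℝ := (p.1 * p.2 ^ 2 - p.2 - 1) ^ 2 + (p.2 ^ 2 - 1) ^ 2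

lemma deriv_twoMinimaFun_fst (a b : ℝ) :
    deriv (fun x => twoMinimaFun (x, b)) a = 2 * (a * b ^ 2 - b - 1) * b ^ 2 := by
  simp [twoMinimaFun]

lemma deriv_twoMinimaFun_snd (a b : ℝ) :
    deriv (fun y => twoMinimaFun (a, y)) b =
      2 * (a * b ^ 2 - b - 1) * (2 * a * b - 1) + 4 * b * (b ^ 2 - 1) := by
  have hu : HasDerivAt (fun y => a * y ^ 2 - y - 1) (a * (2 * b) - 1) b := by
    simpa using (((hasDerivAt_pow 2 b).const_mul a).sub (hasDerivAt_id b)).sub_const 1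
  have hv : HasDerivAt (fun y => y ^ 2 - 1) (2 * b) b := by
    simpa using (hasDerivAt_pow 2 b).sub_const 1
  exact ((hu.pow 2).add (hv.pow 2)).deriv.trans (by ring)

lemma twoMinimaFun_critical_equations_iff (a b : ℝ) :
    2 * (a * b ^ 2 - b - 1) * b ^ 2 = 0 ∧
      2 * (a * b ^ 2 - b - 1) * (2 * a * b - 1) + 4 * b * (b ^ 2 - 1) = 0 ↔
    (a, b) = (2, 1) ∨ (a, b) = (0, -1) := by
  constructor
  · rintro ⟨hx, hy⟩
    have hb : b ≠ 0 := by rintro rfl; norm_num at hy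
    have hu : a * b ^ 2 - b - 1 = 0 := by simpa [hb] using hx
    have hb_sq : b ^ 2 = 1 := by
      rw [hu] at hy
      have : b ^ 2 - 1 = 0 := by simpa [hb] using hy
      linarith
    rcases sq_eq_one_iff.mp hb_sq with rfl | rfl
    · left; rw [Prod.mk.injEq]; exact ⟨by linarith, rfl⟩
    · right; rw [Prod.mk.injEq]; exact ⟨by linarith, rfl⟩
  · rintro (h | h) <;> rw [Prod.mk.injEq] at h <;> obtain ⟨rfl, rfl⟩ := h <;> norm_num

lemma isCritPt_twoMinimaFun_iff (p : ℝ × ℝ) :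
    IsCritPt twoMinimaFun p ↔ p = (2, 1) ∨ p = (0, -1) := by
  rw [IsCritPt, deriv_twoMinimaFun_fst, deriv_twoMinimaFun_snd, twoMinimaFun_critical_equations_iff]

lemma twoMinimaFun_nonneg (p : ℝ × ℝ) : 0 ≤ twoMinimaFun p := by
  unfold twoMinimaFun; positivity

theorem two_absolute_minima_no_other_critical_points
    (f : ℝ × ℝ → ℝ)
    (hf : ∀ p : ℝ × ℝ, f p = (p.1 * p.2 ^ 2 - p.2 - 1) ^ 2 + (p.2 ^ 2 - 1) ^ 2) :
    {p : ℝ × ℝ | IsCritPt f p} = {((2 : ℝ), (1 : ℝ)), ((0 : ℝ), (-1 : ℝ))} ∧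
    IsLocalMin f ((2 : ℝ), (1 : ℝ)) ∧ IsLocalMin f ((0 : ℝ), (-1 : ℝ)) ∧
    f ((2 : ℝ), (1 : ℝ)) = 0 ∧ f ((0 : ℝ), (-1 : ℝ)) = 0 ∧
    ∀ q : ℝ × ℝ, 0 ≤ f q := by
  obtain rfl : f = twoMinimaFun := funext hf
  have h₁ : twoMinimaFun (2, 1) = 0 := by norm_num [twoMinimaFun]
  have h₂ : twoMinimaFun (0, -1) = 0 := by norm_num [twoMinimaFun]
  refine ⟨Set.ext isCritPt_twoMinimaFun_iff, ?_, ?_, h₁, h₂, twoMinimaFun_nonneg⟩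
  · exact .of_forall fun q => h₁.trans_le (twoMinimaFun_nonneg q)
  · exact .of_forall fun q => h₂.trans_le (twoMinimaFun_nonneg q)
end
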